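/- Let m ≥ 2 and n ≥ 1 be integers. Let A = {e₁, …, eₙ} ⊂ ℝⁿ be the set of standard basis vectors, and let B ⊂ ℝⁿ be the set of m^n centres of the m^n non-overlapping closed subcubes of side length 2/m that partition [−1,1]ⁿ (i.e., B = { ((2k₁+1−m)/m, …, (2kₙ+1−m)/m) : kᵢ ∈ {0,…,m−1} }). Let h(a,b) be the Euclidean inner product on ℝⁿ, and define the semimetrics d_A(a,a') := sup_{b∈B}|h(a,b) − h(a',b)| on A and d_B(b,b') := sup_{a∈A}|h(a,b) − h(a,b')| on B. Set ε = 1/(3m²) and δ = 1/m − 1/(2m²), and C := sup_{a∈A, b∈B}|h(a,b)|. Then N_A(ε) = n, C = 1 − 1/m, and N_B^Δ(ε + δ) = m^n = (⌈C/δ⌉)^{N_A(ε)}; in particular equality holds in the bound N_B^Δ(ε+δ) ≤ (⌈C/δ⌉)^{N_A(ε)}. -/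

import Mathlib

/-!
Distinct basis vectors are at `d_A`-distance at least `2 (1 - 1/m) ≥ 1 > ε`: take a centre whose
coordinates at the two indices are the extreme values `±(1 - 1/m)`. Hence no point of a cover
serves two of them and `N_A(ε) = n`. Distinct centres differ by at least `2/m` in some
coordinate, `d_B` dominates every coordinate difference, and `2 (ε + δ) = 2/m - 1/(3m²) < 2/m`,
so a set of diameter at most `2 (ε + δ)` contains at most one centre and `N_B^Δ(ε + δ) = mⁿ`.
Finally `C = 1 - 1/m` is attained at the extreme coordinate, and `C/δ = m - m/(2m - 1)`
lies in `(m - 1, m]`.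
-/

/-- The intrinsic covering number `N_S(ε)` of a subset `S` of a semimetric space
`(E, d)`: the least cardinality of a finite set `F ⊆ S` such that every point of `S`
is within distance `ε` of some point of `F`; `∞` if no such finite set exists. -/
noncomputable def icov {E : Type*} (d : E → E → ℝ) (S : Set E) (ε : ℝ) : ℕ∞ :=
  sInf ((fun F : Finset E => (F.card : ℕ∞)) ''
    {F : Finset E | ↑F ⊆ S ∧ ∀ x ∈ S, ∃ y ∈ F, d x y ≤ ε})

/-- The diameter covering number `N_S^Δ(ε)`: the least number of subsets of `S`, each of
diameter at most `2ε`, needed to cover `S`; `∞` if no finite such cover exists. -/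
noncomputable def dcovIn {E : Type*} (d : E → E → ℝ) (S : Set E) (ε : ℝ) : ℕ∞ :=
  sInf ((fun k : ℕ => (k : ℕ∞)) ''
    {k : ℕ | ∃ G : Fin k → Set E, (∀ i, G i ⊆ S) ∧
      (∀ i, ∀ x ∈ G i, ∀ y ∈ G i, d x y ≤ 2 * ε) ∧ S ⊆ ⋃ i, G i})

open Set

section SeparatedCoverings

variable {E ι : Type*} [Fintype ι] (d : E → E → ℝ)

theorem icov_range_eq_card (f : ι → E) (ε : ℝ) (hself : ∀ i, d (f i) (f i) ≤ ε)
    (hsep : ∀ i j, i ≠ j → ε < d (f i) (f j)) :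
    icov d (range f) ε = Fintype.card ι := by
  classical
  apply le_antisymm
  · refine sInf_le_of_le ⟨Finset.univ.image f, ⟨by simp, ?_⟩, rfl⟩
      (Nat.cast_le.2 (Finset.card_image_le.trans_eq Finset.card_univ))
    rintro _ ⟨i, rfl⟩
    exact ⟨f i, by simp, hself i⟩
  · refine le_sInf ?_
    rintro _ ⟨F, ⟨hsub, hcov⟩, rfl⟩
    have hmem : ∀ i, f i ∈ F := fun i => by
      obtain ⟨_, hyF, hdist⟩ := hcov (f i) (mem_range_self i)
      obtain ⟨j, rfl⟩ := hsub hyF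
      obtain rfl : i = j := by_contra fun hij => (hsep i j hij).not_ge hdist
      exact hyF
    have hinj : Function.Injective f := fun i j hij =>
      by_contra fun hne => (hsep i j hne).not_ge (hij ▸ hself i)
    exact Nat.cast_le.2 <| Finset.card_univ.symm.trans_le <|
      Finset.card_le_card_of_injOn f (fun i _ => hmem i) hinj.injOn

theorem dcovIn_range_eq_card (g : ι → E) (ε : ℝ) (hself : ∀ i, d (g i) (g i) ≤ 2 * ε)
    (hsep : ∀ i j, i ≠ j → 2 * ε < d (g i) (g j)) :
    dcovIn d (range g) ε = Fintype.card ι := by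
  apply le_antisymm
  · let e := Fintype.equivFin ι
    refine sInf_le ⟨_, ⟨fun t => {g (e.symm t)}, ?_, ?_, ?_⟩, rfl⟩
    · intro t
      simp
    · rintro t _ rfl _ rfl
      exact hself _
    · rintro _ ⟨i, rfl⟩
      exact mem_iUnion.2 ⟨e i, by simp⟩
  · refine le_sInf ?_
    rintro _ ⟨k, ⟨G, -, hdiam, hcov⟩, rfl⟩
    choose φ hφ using fun i => mem_iUnion.1 (hcov (mem_range_self i))
    have hinj : Function.Injective φ := fun i j hij =>
      by_contra fun hne => (hsep i j hne).not_ge (hdiam _ _ (hφ i) _ (hij ▸ hφ j))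
    simpa using Fintype.card_le_of_injective φ hinj

end SeparatedCoverings

noncomputable def cubeCentre (m : ℕ) (k : Fin m) : ℝ := (2 * (k : ℕ) + 1 - m) / m

section CubeCentre

variable {m : ℕ}

theorem cubeCentre_rev (k : Fin m) : cubeCentre m k.rev = -cubeCentre m k := by
  have hk : (k : ℕ) + 1 ≤ m := k.isLt
  simp only [cubeCentre, Fin.val_rev, Nat.cast_sub hk, Nat.cast_add, Nat.cast_one]
  ring

theorem abs_cubeCentre_le (k : Fin m) : |cubeCentre m k| ≤ 1 - 1 / m := by
  have hm : (0 : ℝ) < m := by exact_mod_cast k.pos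
  have hk : ((k : ℕ) : ℝ) + 1 ≤ m := by exact_mod_cast k.isLt
  have hbound : (1 - 1 / (m : ℝ)) * m = m - 1 := by field_simp
  rw [cubeCentre, abs_div, abs_of_pos hm, div_le_iff₀ hm, abs_le, hbound]
  constructor <;> linarith

theorem abs_cubeCentre_zero (hm : 0 < m) : |cubeCentre m ⟨0, hm⟩| = 1 - 1 / m := by
  have hm' : (1 : ℝ) ≤ m := by exact_mod_cast hm
  have hzero : cubeCentre m ⟨0, hm⟩ = -(1 - 1 / m) := by
    simp only [cubeCentre, Nat.cast_zero, mul_zero, zero_add]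
    field_simp
    ring
  rw [hzero, abs_neg, abs_of_nonneg (sub_nonneg.2 ((div_le_one (by linarith)).2 hm'))]

theorem two_div_le_abs_cubeCentre_sub {k k' : Fin m} (h : k ≠ k') :
    2 / m ≤ |cubeCentre m k - cubeCentre m k'| := by
  have hm : (0 : ℝ) < m := by exact_mod_cast k.pos
  have hgap : 1 ≤ |((k : ℕ) : ℝ) - (k' : ℕ)| := by
    rcases Nat.lt_or_gt_of_ne (Fin.val_ne_of_ne h) with hlt | hlt
    · rw [abs_sub_comm]
      have : ((k : ℕ) : ℝ) + 1 ≤ (k' : ℕ) := by exact_mod_cast hlt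
      exact le_abs.2 (Or.inl (by linarith))
    · have : ((k' : ℕ) : ℝ) + 1 ≤ (k : ℕ) := by exact_mod_cast hlt
      exact le_abs.2 (Or.inl (by linarith))
  have hsub : cubeCentre m k - cubeCentre m k' = 2 * (((k : ℕ) : ℝ) - (k' : ℕ)) / m := by
    simp only [cubeCentre]
    ring
  rw [hsub, abs_div, abs_mul, abs_two, abs_of_pos hm]
  gcongr
  linarith

end CubeCentre

section Configuration

variable {m : ℕ} {ι : Type*} [Finite ι]

theorem one_le_iSup_abs_cubeCentre_sub [DecidableEq ι] (hm : 2 ≤ m) {j j' : ι} (h : j ≠ j') :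
    1 ≤ ⨆ k : ι → Fin m, |cubeCentre m (k j) - cubeCentre m (k j')| := by
  have hmR : (2 : ℝ) ≤ m := by exact_mod_cast hm
  let lo : Fin m := ⟨0, by omega⟩
  refine le_ciSup_of_le (Finite.bddAbove_range _) (Function.update (fun _ => lo) j lo.rev) ?_
  simp only [Function.update_self, Function.update_of_ne h.symm, cubeCentre_rev]
  rw [← neg_add', abs_neg, ← two_mul, abs_mul, abs_two, abs_cubeCentre_zero]
  linarith [one_div_le_one_div_of_le two_pos hmR]

theorem two_div_le_iSup_abs_cubeCentre_sub {k k' : ι → Fin m} (h : k ≠ k') :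
    2 / m ≤ ⨆ j, |cubeCentre m (k j) - cubeCentre m (k' j)| := by
  obtain ⟨j, hj⟩ := Function.ne_iff.1 h
  exact le_ciSup_of_le (Finite.bddAbove_range _) j (two_div_le_abs_cubeCentre_sub hj)

theorem iSup_abs_single_one_dotProduct_cubeCentre [Fintype ι] [DecidableEq ι] [Nonempty ι]
    (hm : 0 < m) :
    ⨆ p : range (fun j : ι => (Pi.single j 1 : ι → ℝ)) ×
      range (fun (k : ι → Fin m) i => cubeCentre m (k i)),
      |(p.1 : ι → ℝ) ⬝ᵥ p.2| = 1 - 1 / m := by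
  let j : ι := Classical.arbitrary ι
  let p : range (fun j : ι => (Pi.single j 1 : ι → ℝ)) ×
      range (fun (k : ι → Fin m) i => cubeCentre m (k i)) :=
    ⟨⟨_, mem_range_self j⟩, ⟨_, mem_range_self fun _ => ⟨0, hm⟩⟩⟩
  have : Nonempty _ := ⟨p⟩
  refine le_antisymm (ciSup_le ?_) (le_ciSup_of_le (Finite.bddAbove_range _) p ?_)
  · rintro ⟨⟨_, j, rfl⟩, ⟨_, k, rfl⟩⟩
    simpa only [single_one_dotProduct] using abs_cubeCentre_le (k j)
  · simp only [p, single_one_dotProduct]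
    exact (abs_cubeCentre_zero hm).ge

end Configuration

theorem natCeil_one_sub_one_div_div_eq {m : ℕ} (hm : 2 ≤ m) :
    ⌈(1 - 1 / (m : ℝ)) / (1 / m - 1 / (2 * m ^ 2))⌉₊ = m := by
  have hmR : (2 : ℝ) ≤ m := by exact_mod_cast hm
  have hmt : (m : ℝ) * (1 / m) = 1 := by field_simp
  have hδ : 1 / (m : ℝ) - 1 / (2 * m ^ 2) = 1 / m * (1 - 1 / (2 * m)) := by ring
  have hs : 0 < 1 / (2 * (m : ℝ)) ∧ 1 / (2 * (m : ℝ)) < 1 / m := by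
    constructor
    · positivity
    · gcongr; linarith
  have hpos : 0 < 1 / (m : ℝ) - 1 / (2 * m ^ 2) := by rw [hδ]; nlinarith
  have hC : 0 < 1 - 1 / (m : ℝ) := by nlinarith
  rw [Nat.ceil_eq_iff (by omega), Nat.cast_sub (by omega), Nat.cast_one,
    lt_div_iff₀ hpos, div_le_iff₀ hpos, hδ, ← mul_assoc, ← mul_assoc, sub_mul, hmt, one_mul]
  constructor <;> nlinarith

theorem two_mul_radius_mem_Ico {x : ℝ} (hx : 2 ≤ x) :
    2 * (1 / (3 * x ^ 2) + (1 / x - 1 / (2 * x ^ 2))) ∈ Ico 0 (2 / x) := by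
  rw [show 2 * (1 / (3 * x ^ 2) + (1 / x - 1 / (2 * x ^ 2))) = 2 / x - 1 / (3 * x ^ 2) by ring,
    mem_Ico, sub_nonneg, sub_lt_self_iff, div_le_div_iff₀ (by positivity) (by positivity)]
  exact ⟨by nlinarith, by positivity⟩

/-- Let `m ≥ 2`, `n ≥ 1`.  Let `A ⊂ ℝⁿ` be the set of standard basis
vectors `e₁, …, eₙ`, and `B ⊂ ℝⁿ` the set of the `mⁿ` centres
`((2k₁+1−m)/m, …, (2kₙ+1−m)/m)`, `kᵢ ∈ {0,…,m−1}`, of the subcubes of side `2/m`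
partitioning `[−1,1]ⁿ`.  Let `h` be the Euclidean inner product, with associated
semimetrics `d_A` on `A` and `d_B` on `B`; set `ε = 1/(3m²)`, `δ = 1/m − 1/(2m²)` and
`C := sup_{a∈A,b∈B} |h(a,b)|`.  Then `N_A(ε) = n`, `C = 1 − 1/m`, and
`N_B^Δ(ε+δ) = mⁿ = (⌈C/δ⌉)^(N_A(ε))`; in particular equality holds in the bound
`N_B^Δ(ε+δ) ≤ (⌈C/δ⌉)^(N_A(ε))`. -/
theorem statement19 (m n : ℕ) (hm : 2 ≤ m) (hn : 1 ≤ n)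
    (Aset : Set (Fin n → ℝ))
    (hAset : Aset = Set.range fun j : Fin n => (Pi.single j 1 : Fin n → ℝ))
    (Bset : Set (Fin n → ℝ))
    (hBset : Bset = Set.range fun k : Fin n → Fin m =>
      fun i : Fin n => (2 * (k i : ℝ) + 1 - m) / m)
    (h : (Fin n → ℝ) → (Fin n → ℝ) → ℝ)
    (hh : ∀ a b : Fin n → ℝ, h a b = ∑ i, a i * b i)
    (dA : (Fin n → ℝ) → (Fin n → ℝ) → ℝ)
    (hdA : ∀ a ∈ Aset, ∀ a' ∈ Aset, dA a a' = ⨆ b : Bset, |h a b - h a' b|)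
    (dB : (Fin n → ℝ) → (Fin n → ℝ) → ℝ)
    (hdB : ∀ b ∈ Bset, ∀ b' ∈ Bset, dB b b' = ⨆ a : Aset, |h a b - h a b'|)
    (ε δ C : ℝ)
    (hε : ε = 1 / (3 * m ^ 2)) (hδ : δ = 1 / m - 1 / (2 * m ^ 2))
    (hC : C = ⨆ p : Aset × Bset, |h p.1 p.2|) :
    icov dA Aset ε = (n : ℕ∞) ∧
    C = 1 - 1 / m ∧
    dcovIn dB Bset (ε + δ) = (m : ℕ∞) ^ n ∧
    ((⌈C / δ⌉₊ : ℕ∞)) ^ n = (m : ℕ∞) ^ n := by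
  set e : Fin n → Fin n → ℝ := fun j => Pi.single j 1
  set c : (Fin n → Fin m) → Fin n → ℝ := fun k i => cubeCentre m (k i)
  obtain rfl : h = fun a b => a ⬝ᵥ b := funext₂ hh
  obtain rfl : Aset = range e := hAset
  obtain rfl : Bset = range c := hBset
  subst hε hδ hC
  have hdA' (j j' : Fin n) : dA (e j) (e j') = ⨆ k, |c k j - c k j'| := by
    rw [hdA _ (mem_range_self j) _ (mem_range_self j'),
      iSup_range' (fun b => |e j ⬝ᵥ b - e j' ⬝ᵥ b|)]
    simp only [e, single_one_dotProduct]
  have hdB' (k k' : Fin n → Fin m) : dB (c k) (c k') = ⨆ j, |c k j - c k' j| := by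
    rw [hdB _ (mem_range_self k) _ (mem_range_self k'),
      iSup_range' (fun a => |a ⬝ᵥ c k - a ⬝ᵥ c k'|)]
    simp only [e, single_one_dotProduct]
  have : Nonempty (Fin n) := ⟨⟨0, hn⟩⟩
  have hC := iSup_abs_single_one_dotProduct_cubeCentre (ι := Fin n) (by omega : 0 < m)
  have hmR : (2 : ℝ) ≤ m := by exact_mod_cast hm
  have hε : 1 / (3 * (m : ℝ) ^ 2) < 1 := by
    rw [div_lt_one (by positivity)]
    nlinarith
  obtain ⟨hεδ₀, hεδ⟩ := two_mul_radius_mem_Ico hmR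
  refine ⟨(icov_range_eq_card dA e _ (fun j => ?_) (fun j j' hjj' => ?_)).trans (by simp), hC,
    (dcovIn_range_eq_card dB c _ (fun k => ?_) (fun k k' hkk' => ?_)).trans (by simp), ?_⟩
  · simp [hdA']
  · exact hε.trans_le ((one_le_iSup_abs_cubeCentre_sub hm hjj').trans_eq (hdA' j j').symm)
  · simpa [hdB'] using hεδ₀
  · exact hεδ.trans_le ((two_div_le_iSup_abs_cubeCentre_sub hkk').trans_eq (hdB' k k').symm)
  · rw [hC, natCeil_one_sub_one_div_div_eq hm]
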